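/- arXiv:2006.11912 — 5 statements merged into one kernel-verified Lean document; each statement's English description precedes it below -/
import Mathlib

section
/- Let μ_A, μ_B ∈ (0,1] and r ≥ 0, and define a = (-μ_A + μ_B + (μ_A+μ_B)cosh 2r)/(4μ_A μ_B), b = (μ_A - μ_B + (μ_A+μ_B)cosh 2r)/(4μ_A μ_B), c = ((μ_A+μ_B) sinh 2r)/(4μ_A μ_B). Then a - c²/b < 1/2 if and only if (μ_A - μ_B)/2 + ((μ_A+μ_B)/2)·cosh 2r > 1. -/
/-!
The invariant `a b - c²` depends only on the purities: since `cosh² - sinh² = 1`,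
`a b - c² = 1 / (4 μ_A μ_B)`. As `b > 0`, the Schur complement condition `a - c²/b < 1/2` is
`a b - c² < b/2`, and clearing the common denominator `4 μ_A μ_B` leaves exactly the numerator
of `b` compared with `2`.
-/

open Real

lemma sub_sq_div_lt_iff {a b c t : ℝ} (hb : 0 < b) : a - c ^ 2 / b < t ↔ a * b - c ^ 2 < t * b := by
  rw [sub_div' hb.ne', div_lt_iff₀ hb]

lemma tmst_det {μA μB : ℝ} (hμA : μA ≠ 0) (hμB : μB ≠ 0) (x y : ℝ) (hxy : x ^ 2 - y ^ 2 = 1) :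
    (-μA + μB + (μA + μB) * x) / (4 * μA * μB) * ((μA - μB + (μA + μB) * x) / (4 * μA * μB))
      - ((μA + μB) * y / (4 * μA * μB)) ^ 2 = 1 / (4 * μA * μB) := by
  field_simp
  linear_combination (μA + μB) ^ 2 * hxy

theorem stmt6_general (μA μB r : ℝ) (hμA : 0 < μA) (hμB : 0 < μB)
    (a b c : ℝ)
    (ha : a = (-μA + μB + (μA + μB) * Real.cosh (2 * r)) / (4 * μA * μB))
    (hb : b = (μA - μB + (μA + μB) * Real.cosh (2 * r)) / (4 * μA * μB))
    (hc : c = ((μA + μB) * Real.sinh (2 * r)) / (4 * μA * μB)) :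
    a - c ^ 2 / b < 1 / 2 ↔
      (μA - μB) / 2 + ((μA + μB) / 2) * Real.cosh (2 * r) > 1 := by
  have hD : 0 < 4 * μA * μB := by positivity
  have hb_pos : 0 < b := by
    rw [hb]
    have := one_le_cosh (2 * r)
    exact div_pos (by nlinarith) hD
  have hdet : a * b - c ^ 2 = 1 / (4 * μA * μB) := by
    rw [ha, hb, hc]
    exact tmst_det hμA.ne' hμB.ne' _ _ (cosh_sq_sub_sinh_sq _)
  rw [sub_sq_div_lt_iff hb_pos, hdet, hb, gt_iff_lt, ← mul_div_assoc, div_lt_div_iff_of_pos_right hD]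
  constructor <;> intro h <;> linarith

theorem stmt6 (μA μB r : ℝ) (hμA : 0 < μA) (hμA1 : μA ≤ 1) (hμB : 0 < μB) (hμB1 : μB ≤ 1)
    (hr : 0 ≤ r)
    (a b c : ℝ)
    (ha : a = (-μA + μB + (μA + μB) * Real.cosh (2 * r)) / (4 * μA * μB))
    (hb : b = (μA - μB + (μA + μB) * Real.cosh (2 * r)) / (4 * μA * μB))
    (hc : c = ((μA + μB) * Real.sinh (2 * r)) / (4 * μA * μB)) :
    a - c ^ 2 / b < 1 / 2 ↔
      (μA - μB) / 2 + ((μA + μB) / 2) * Real.cosh (2 * r) > 1 :=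
  stmt6_general μA μB r hμA hμB a b c ha hb hc
end

section
/- Let μ_A, μ_B ∈ (0,1], r ≥ 0 and ς := (μ_A - μ_B)/2 + ((μ_A+μ_B)/2)·cosh 2r. If ς > 1 then √((μ_A+μ_B)² cosh² 2r − 4μ_A μ_B) > 2 − (μ_A+μ_B) cosh 2r; i.e. nonclassical steerability of a TMST implies its entanglement. -/
/-!
With `x = (μ_A + μ_B) cosh 2r` and `p = μ_A μ_B`, the entanglement criterion
`√(x² - 4p) > 2 - x` holds as soon as `x > 1 + p`: squaring turns it into exactly this.
Steering gives `x > 2 - μ_A + μ_B`, and `2 - μ_A + μ_B - (1 + p) = (1 - μ_A)(1 + μ_B) ≥ 0`.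
-/

open Real

lemma two_sub_lt_sqrt_sq_sub_four_mul {x p : ℝ} (h : 1 + p < x) : 2 - x < √(x ^ 2 - 4 * p) := by
  rcases lt_or_ge (2 - x) 0 with hneg | hnonneg
  · exact hneg.trans_le (sqrt_nonneg _)
  · rw [lt_sqrt hnonneg]
    nlinarith

lemma one_add_mul_lt_of_two_lt_sub_add {a b x : ℝ} (ha : a ≤ 1) (hb : -1 ≤ b)
    (h : 2 < a - b + x) : 1 + a * b < x := by
  nlinarith [mul_nonneg (sub_nonneg.2 ha) (neg_le_iff_add_nonneg.1 hb)]

theorem stmt8_general (μA μB r : ℝ) (hμA1 : μA ≤ 1) (hμB : 0 < μB)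
    (ς : ℝ) (hς : ς = (μA - μB) / 2 + ((μA + μB) / 2) * Real.cosh (2 * r))
    (hsteer : ς > 1) :
    Real.sqrt ((μA + μB) ^ 2 * Real.cosh (2 * r) ^ 2 - 4 * μA * μB) >
      2 - (μA + μB) * Real.cosh (2 * r) := by
  have hx : 1 + μA * μB < (μA + μB) * cosh (2 * r) :=
    one_add_mul_lt_of_two_lt_sub_add hμA1 (by linarith) (by linarith)
  convert two_sub_lt_sqrt_sq_sub_four_mul hx using 2
  ring

theorem stmt8 (μA μB r : ℝ) (hμA : 0 < μA) (hμA1 : μA ≤ 1) (hμB : 0 < μB) (hμB1 : μB ≤ 1)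
    (hr : 0 ≤ r)
    (ς : ℝ) (hς : ς = (μA - μB) / 2 + ((μA + μB) / 2) * Real.cosh (2 * r))
    (hsteer : ς > 1) :
    Real.sqrt ((μA + μB) ^ 2 * Real.cosh (2 * r) ^ 2 - 4 * μA * μB) >
      2 - (μA + μB) * Real.cosh (2 * r) :=
  stmt8_general μA μB r hμA1 hμB ς hς hsteer
end

section
/- Let N_s > 0, N_th > 0, Γ > 0 and define a'(t) = N_th + 1/2 + e^{−Γt}(N_s − N_th), b' = N_s + 1/2, c'(t) = √(e^{−Γt} N_s(1+N_s)). Then a'(t) − c'(t)²/b' < 1/2 if and only if t < (1/Γ)·log(1 + N_s/(N_th(1+2N_s))). -/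
/-! The Schur complement `a' - c'^2/b'` equals `N_th + 1/2 - e^{-Γt} (N_th + N_s/(1 + 2N_s))`,
so the criterion says that the decaying factor `e^{-Γt}` still exceeds `N_th / (N_th + N_s/(1 + 2N_s))`;
taking logarithms gives the threshold time. -/

open Real

lemma schur_complement_eq {E Ns Nth : ℝ} (hE : 0 ≤ E) (hNs : 0 ≤ Ns) :
    Nth + 1 / 2 + E * (Ns - Nth) - √(E * Ns * (1 + Ns)) ^ 2 / (Ns + 1 / 2) =
      Nth + 1 / 2 - E * (Nth + Ns / (1 + 2 * Ns)) := by
  rw [sq_sqrt (by positivity)]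
  field_simp
  ring

lemma lt_exp_neg_mul_mul_iff {Γ t x y : ℝ} (hΓ : 0 < Γ) (hx : 0 < x) (hy : 0 < y) :
    x < exp (-Γ * t) * y ↔ t < (1 / Γ) * log (y / x) := by
  calc x < exp (-Γ * t) * y ↔ exp (Γ * t) < y / x := by
        rw [lt_div_iff₀ hx, neg_mul, exp_neg, ← div_eq_inv_mul, lt_div_iff₀ (exp_pos _), mul_comm]
    _ ↔ Γ * t < log (y / x) := (lt_log_iff_exp_lt (by positivity)).symm
    _ ↔ t < (1 / Γ) * log (y / x) := by rw [one_div_mul_eq_div, lt_div_iff₀' hΓ]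

theorem stmt14 (Ns Nth Γ t : ℝ) (hNs : 0 < Ns) (hNth : 0 < Nth) (hΓ : 0 < Γ)
    (a' b' c' : ℝ)
    (ha : a' = Nth + 1 / 2 + Real.exp (-Γ * t) * (Ns - Nth))
    (hb : b' = Ns + 1 / 2)
    (hc : c' = Real.sqrt (Real.exp (-Γ * t) * Ns * (1 + Ns))) :
    a' - c' ^ 2 / b' < 1 / 2 ↔
      t < (1 / Γ) * Real.log (1 + Ns / (Nth * (1 + 2 * Ns))) := by
  have hratio : (Nth + Ns / (1 + 2 * Ns)) / Nth = 1 + Ns / (Nth * (1 + 2 * Ns)) := by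
    field_simp
  rw [ha, hb, hc, schur_complement_eq (exp_pos _).le hNs.le, ← hratio,
    ← lt_exp_neg_mul_mul_iff hΓ hNth (by positivity)]
  constructor <;> intro h <;> linarith
end

section
/- For all N_s > 0 and N_th > 0, (1/Γ)·log(1 + N_s/(N_th(1+2N_s))) < (1/Γ)·log(1 + 1/N_th); i.e., the maximum propagation time for nonclassical steering t_ns is strictly smaller than the entanglement-death time t_ent, even as N_s → ∞. -/
/-! Since `Ns / (1 + 2 Ns) < 1 / 2` for every `Ns ≥ 0`, the argument of the logarithm in `t_ns`
stays below `1 + 1 / (2 Nth) < 1 + 1 / Nth`, uniformly in the squeezing. -/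

open Real

lemma div_one_add_two_mul_lt_half {x : ℝ} (hx : 0 ≤ x) : x / (1 + 2 * x) < 1 / 2 := by
  rw [div_lt_div_iff₀ (by positivity) two_pos]
  linarith

lemma div_mul_one_add_two_mul_lt_inv {x y : ℝ} (hx : 0 ≤ x) (hy : 0 < y) :
    x / (y * (1 + 2 * x)) < 1 / y := by
  calc x / (y * (1 + 2 * x)) = x / (1 + 2 * x) / y := by rw [mul_comm, div_div]
    _ < 1 / 2 / y := div_lt_div_of_pos_right (div_one_add_two_mul_lt_half hx) hy
    _ < 1 / y := by gcongr; norm_num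

theorem stmt15 (Ns Nth Γ : ℝ) (hNs : 0 < Ns) (hNth : 0 < Nth) (hΓ : 0 < Γ) :
    (1 / Γ) * Real.log (1 + Ns / (Nth * (1 + 2 * Ns))) <
      (1 / Γ) * Real.log (1 + 1 / Nth) := by
  have hsteer : Ns / (Nth * (1 + 2 * Ns)) < 1 / Nth :=
    div_mul_one_add_two_mul_lt_inv hNs.le hNth
  gcongr
end

section
/- There exist a, b, c₁, c₂ ∈ ℝ (e.g. a = b = 0.9, c₁ = 0.55, c₂ = −0.7) such that (a − c₁²/b)(a − c₂²/b) < 1/4 but a − (min{|c₁|,|c₂|})²/b ≥ 1/2; i.e., EPR-steerability does not imply strong nonclassical steering. -/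
theorem stmt18 :
    ∃ a b c₁ c₂ : ℝ,
      (a - c₁ ^ 2 / b) * (a - c₂ ^ 2 / b) < 1 / 4 ∧
      a - (min |c₁| |c₂|) ^ 2 / b ≥ 1 / 2 :=
  ⟨0.9, 0.9, 0.55, -0.7, by norm_num [abs_of_pos]⟩
end
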